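/- If R : ℓ∞ → ℓ∞ is a bounded linear operator with R[c₀] ⊆ c₀, then R = S₀ + S₁, where S₀ : ℓ∞ → ℓ∞ is a bounded linear operator given by a c₀-matrix and S₁ : ℓ∞ → ℓ∞ is a bounded linear operator with S₁ f = 0 for every f ∈ c₀. -/

import Mathlib

open Filter Topology

noncomputable section

/-- The Banach space `ℓ∞` of bounded real sequences with the sup norm. -/
abbrev ellInfty : Type := BoundedContinuousFunction ℕ ℝ

/-- `c₀`, the subspace of `ℓ∞` of sequences converging to `0`. -/
def czero : Submodule ℝ ellInfty where
  carrier := {f | Tendsto (⇑f) atTop (𝓝 (0 : ℝ))}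
  add_mem' := by
    intro a b ha hb
    have hab := ha.add hb
    simp only [add_zero] at hab
    exact hab
  zero_mem' := by
    show Tendsto _ _ _
    simp only [BoundedContinuousFunction.coe_zero]
    exact tendsto_const_nhds
  smul_mem' := by intro c f hf; simpa using hf.const_mul c

/-- `R : ℓ∞ → ℓ∞` is given by the `c₀`-matrix `b`: the rows of `b` are absolutely summable
with uniformly bounded `ℓ₁`-norms, the columns of `b` converge to `0`, and `R` acts by
matrix multiplication by `b`. -/
structure IsC0Matrix (R : ellInfty →L[ℝ] ellInfty) (b : ℕ → ℕ → ℝ) : Prop where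
  rows_summable : ∀ i, Summable fun j => |b i j|
  rows_bounded : ∃ C : ℝ, ∀ i, (∑' j, |b i j|) ≤ C
  cols_vanish : ∀ j, Tendsto (fun i => b i j) atTop (𝓝 (0 : ℝ))
  matrix_repr : ∀ f : ellInfty, ∀ i, R f i = ∑' j, b i j * f j

/-! With `e j` the unit vectors, `R` has the matrix `b i j = R (e j) i`. Evaluating `R` at
the sign vectors `∑_{j<n} sign (b i j) • e j`, of norm at most `1`, bounds every row `ℓ₁`-norm
by `‖R‖`, so `b` defines a bounded operator `S₀` on `ℓ∞`; its columns `R (e j)` lie in `c₀`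
because `R` preserves `c₀`. Since `S₀` and `R` agree on the `e j`, whose span is dense in `c₀`,
the difference `S₁ = R - S₀` vanishes on `c₀`. -/

open Finset

namespace ellInfty

def unitVec (j : ℕ) : ellInfty :=
  .ofNormedAddCommGroupDiscrete (Pi.single j (1 : ℝ)) 1 fun k => by
    by_cases hk : k = j <;> simp [hk]

lemma unitVec_apply (j k : ℕ) : unitVec j k = if k = j then 1 else 0 :=
  Pi.single_apply j 1 k

lemma unitVec_mem_czero (j : ℕ) : unitVec j ∈ czero := by
  refine tendsto_const_nhds.congr' ?_
  filter_upwards [eventually_gt_atTop j] with k hk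
  simp [unitVec_apply, hk.ne']

lemma sum_smul_unitVec_apply (c : ℕ → ℝ) (n k : ℕ) :
    (∑ j ∈ range n, c j • unitVec j) k = if k ∈ range n then c k else 0 := by
  simp [BoundedContinuousFunction.coe_sum, unitVec_apply]

lemma norm_sum_smul_unitVec_le {c : ℕ → ℝ} {C : ℝ} (hC : 0 ≤ C) (hc : ∀ j, |c j| ≤ C) (n : ℕ) :
    ‖∑ j ∈ range n, c j • unitVec j‖ ≤ C := by
  refine (BoundedContinuousFunction.norm_le hC).2 fun k => ?_
  rw [sum_smul_unitVec_apply]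
  split_ifs
  · exact hc k
  · simpa using hC

lemma tendsto_sum_smul_unitVec {f : ellInfty} (hf : f ∈ czero) :
    Tendsto (fun n => ∑ j ∈ range n, f j • unitVec j) atTop (𝓝 f) := by
  rw [Metric.tendsto_atTop]
  intro ε hε
  obtain ⟨N, hN⟩ := Metric.tendsto_atTop.1 hf (ε / 2) (half_pos hε)
  refine ⟨N, fun n hn => ?_⟩
  have hdist : dist (∑ j ∈ range n, f j • unitVec j) f ≤ ε / 2 := by
    rw [dist_eq_norm]
    refine (BoundedContinuousFunction.norm_le (half_pos hε).le).2 fun k => ?_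
    rw [BoundedContinuousFunction.sub_apply, sum_smul_unitVec_apply]
    split_ifs with hk
    · simpa using (half_pos hε).le
    · simpa [Real.dist_eq] using (hN k (hn.trans (by simpa using hk))).le
  linarith

lemma eq_of_mem_czero_of_eq_unitVec {F : Type*} [TopologicalSpace F] [T2Space F]
    [AddCommMonoid F] [Module ℝ F] {S T : ellInfty →L[ℝ] F}
    (hST : ∀ j, S (unitVec j) = T (unitVec j)) {f : ellInfty} (hf : f ∈ czero) : S f = T f := by
  have hlim (U : ellInfty →L[ℝ] F) :
      Tendsto (fun n => ∑ j ∈ range n, f j • U (unitVec j)) atTop (𝓝 (U f)) := by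
    have := (U.continuous.tendsto f).comp (tendsto_sum_smul_unitVec hf)
    simpa only [Function.comp_def, map_sum, map_smul] using this
  exact tendsto_nhds_unique (hlim S) (by simpa only [hST] using hlim T)

section MatrixOperator

variable {b : ℕ → ℕ → ℝ} {C : ℝ}

lemma summable_abs_row (hb : ∀ i n, ∑ j ∈ range n, |b i j| ≤ C) (i : ℕ) :
    Summable fun j => |b i j| :=
  summable_of_sum_range_le (fun _ => abs_nonneg _) (hb i)

lemma tsum_abs_row_le (hb : ∀ i n, ∑ j ∈ range n, |b i j| ≤ C) (i : ℕ) :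
    ∑' j, |b i j| ≤ C :=
  Real.tsum_le_of_sum_range_le (fun _ => abs_nonneg _) (hb i)

lemma norm_row_mul_le (f : ellInfty) (i j : ℕ) : ‖b i j * f j‖ ≤ |b i j| * ‖f‖ := by
  rw [norm_mul, Real.norm_eq_abs]
  exact mul_le_mul_of_nonneg_left (f.norm_coe_le_norm j) (abs_nonneg _)

lemma summable_row_mul (hb : ∀ i n, ∑ j ∈ range n, |b i j| ≤ C) (f : ellInfty) (i : ℕ) :
    Summable fun j => b i j * f j :=
  .of_norm_bounded ((summable_abs_row hb i).mul_right ‖f‖) (norm_row_mul_le f i)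

lemma norm_tsum_row_mul_le (hb : ∀ i n, ∑ j ∈ range n, |b i j| ≤ C) (f : ellInfty) (i : ℕ) :
    ‖∑' j, b i j * f j‖ ≤ C * ‖f‖ :=
  calc ‖∑' j, b i j * f j‖ ≤ (∑' j, |b i j|) * ‖f‖ :=
        tsum_of_norm_bounded ((summable_abs_row hb i).hasSum.mul_right ‖f‖) (norm_row_mul_le f i)
    _ ≤ C * ‖f‖ := by gcongr; exact tsum_abs_row_le hb i

/-- Bounding the partial sums of the rows gives both their summability and the bound on their
`ℓ₁`-norms. -/
def matrixCLM (hb : ∀ i n, ∑ j ∈ range n, |b i j| ≤ C) :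
    ellInfty →L[ℝ] ellInfty :=
  LinearMap.mkContinuous
    { toFun f := .ofNormedAddCommGroupDiscrete (fun i => ∑' j, b i j * f j) (C * ‖f‖)
        (norm_tsum_row_mul_le hb f)
      map_add' f g := by
        ext i
        simp only [BoundedContinuousFunction.coe_add, Pi.add_apply, mul_add,
          BoundedContinuousFunction.coe_ofNormedAddCommGroupDiscrete]
        exact (summable_row_mul hb f i).tsum_add (summable_row_mul hb g i)
      map_smul' c f := by
        ext i
        simp only [BoundedContinuousFunction.coe_smul, smul_eq_mul,
          BoundedContinuousFunction.coe_ofNormedAddCommGroupDiscrete, RingHom.id_apply,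
          mul_left_comm _ c, tsum_mul_left] }
    C fun f => BoundedContinuousFunction.norm_ofNormedAddCommGroup_le _
      (mul_nonneg (by simpa using hb 0 0) (norm_nonneg f)) (norm_tsum_row_mul_le hb f)

lemma matrixCLM_apply (hb : ∀ i n, ∑ j ∈ range n, |b i j| ≤ C) (f : ellInfty) (i : ℕ) :
    matrixCLM hb f i = ∑' j, b i j * f j := by
  rfl

lemma matrixCLM_unitVec (hb : ∀ i n, ∑ j ∈ range n, |b i j| ≤ C) (i j : ℕ) :
    matrixCLM hb (unitVec j) i = b i j := by
  rw [matrixCLM_apply, tsum_eq_single j fun k hk => by simp [unitVec_apply, hk]]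
  simp [unitVec_apply]

lemma isC0Matrix_matrixCLM (hb : ∀ i n, ∑ j ∈ range n, |b i j| ≤ C)
    (hcol : ∀ j, Tendsto (fun i => b i j) atTop (𝓝 0)) : IsC0Matrix (matrixCLM hb) b where
  rows_summable := summable_abs_row hb
  rows_bounded := ⟨C, tsum_abs_row_le hb⟩
  cols_vanish := hcol
  matrix_repr := matrixCLM_apply hb

end MatrixOperator

lemma sum_range_abs_apply_unitVec_le (φ : ellInfty →L[ℝ] ℝ) (n : ℕ) :
    ∑ j ∈ range n, |φ (unitVec j)| ≤ ‖φ‖ := by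
  set g := ∑ j ∈ range n, (SignType.sign (φ (unitVec j)) : ℝ) • unitVec j
  have hg : ‖g‖ ≤ 1 := norm_sum_smul_unitVec_le zero_le_one
    (fun j => by cases SignType.sign (φ (unitVec j)) <;> simp) n
  calc ∑ j ∈ range n, |φ (unitVec j)| = φ g := by simp [g, map_sum, sign_mul_self]
    _ ≤ ‖φ g‖ := Real.le_norm_self _
    _ ≤ ‖φ‖ * ‖g‖ := φ.le_opNorm g
    _ ≤ ‖φ‖ := mul_le_of_le_one_right (norm_nonneg φ) hg

lemma sum_range_abs_apply_unitVec_apply_le (R : ellInfty →L[ℝ] ellInfty) (i n : ℕ) :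
    ∑ j ∈ range n, |R (unitVec j) i| ≤ ‖R‖ := by
  have hrow := sum_range_abs_apply_unitVec_le ((BoundedContinuousFunction.evalCLM ℝ i).comp R) n
  refine hrow.trans (ContinuousLinearMap.opNorm_le_bound _ (norm_nonneg R) fun f => ?_)
  exact ((R f).norm_coe_le_norm i).trans (R.le_opNorm f)

end ellInfty

open ellInfty

/-- Every bounded operator on `ℓ∞` preserving `c₀` decomposes as the sum of an operator
given by a `c₀`-matrix and an operator vanishing on `c₀`. -/
theorem statement3 (R : ellInfty →L[ℝ] ellInfty)
    (h : ∀ f : ellInfty, f ∈ czero → R f ∈ czero) :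
    ∃ S₀ S₁ : ellInfty →L[ℝ] ellInfty,
      R = S₀ + S₁ ∧ (∃ b : ℕ → ℕ → ℝ, IsC0Matrix S₀ b) ∧
      (∀ f ∈ czero, S₁ f = 0) := by
  set S₀ := matrixCLM (sum_range_abs_apply_unitVec_apply_le R)
  have hS₀ (j : ℕ) : S₀ (unitVec j) = R (unitVec j) :=
    BoundedContinuousFunction.ext fun i => matrixCLM_unitVec _ i j
  refine ⟨S₀, R - S₀, by abel, ⟨_, isC0Matrix_matrixCLM _ fun j => h _ (unitVec_mem_czero j)⟩,
    fun f hf => ?_⟩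
  rw [sub_apply, sub_eq_zero]
  exact (eq_of_mem_czero_of_eq_unitVec hS₀ hf).symm
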